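/- arXiv:1404.7199 — 2 statements merged into one kernel-verified Lean document; each statement's English description precedes it below -/
import Mathlib

section
/- Let v(x) = v4 x^4/24 be a pure quartic and let u be the unique quadratic polynomial whose averages agree with those of v on the intervals [-D,-h], [-h,h], [h,D] (0 < h < D). Then the constant term of r = u - v equals -D^2 h^2 v4/120 plus terms of order O(D^6 + h^6), and the second derivative of r at 0 equals (D^2 + h^2) v4/20 plus terms of order O(D^4 + h^4). -/
open MeasureTheory intervalIntegral

lemma quad_int (a b c p q : ℝ) :
    ∫ x in p..q, (a + b * x + c * x ^ 2)
      = a * (q - p) + b * (q ^ 2 - p ^ 2) / 2 + c * (q ^ 3 - p ^ 3) / 3 := by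
  have h1 : IntervalIntegrable (fun x : ℝ => a + b * x) volume p q := by
    apply Continuous.intervalIntegrable; continuity
  have h2 : IntervalIntegrable (fun x : ℝ => c * x ^ 2) volume p q := by
    apply Continuous.intervalIntegrable; continuity
  have h3 : IntervalIntegrable (fun x : ℝ => b * x) volume p q := by
    apply Continuous.intervalIntegrable; continuity
  rw [show (fun x : ℝ => a + b * x + c * x ^ 2) = (fun x : ℝ => (a + b * x) + c * x ^ 2) from rfl]
  rw [integral_add h1 h2, integral_add (by apply Continuous.intervalIntegrable; continuity) h3,
    intervalIntegral.integral_const, intervalIntegral.integral_const_mul, intervalIntegral.integral_const_mul, integral_id,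
    integral_pow]
  push_cast; ring_nf

lemma quart_int (v4 p q : ℝ) :
    ∫ x in p..q, v4 * x ^ 4 / 24 = v4 * (q ^ 5 - p ^ 5) / 120 := by
  rw [show (∫ x in p..q, v4 * x ^ 4 / 24) = ∫ x in p..q, (v4/24) * x ^ 4 from by
    congr 1; funext x; ring]
  rw [intervalIntegral.integral_const_mul, integral_pow]; push_cast; ring

/-- For the pure quartic `v x = v4 x⁴ / 24` and the quadratic
`u x = a + b x + c x²` whose averages match those of `v` on `[-D,-h]`, `[-h,h]`, `[h,D]`
(`0 < h < D`), the constant term of `r = u - v` equals `-D² h² v4 / 120` up to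
`O(D⁶ + h⁶)` terms, and `r'' 0 = 2 c` equals `(D² + h²) v4 / 20` up to `O(D⁴ + h⁴)`
terms. -/
theorem lifting_residual_quartic :
    ∃ C > (0 : ℝ), ∀ (v4 h D a b c : ℝ), 0 < h → h < D →
      ((1 / (D - h)) * ∫ x in (-D)..(-h), (a + b * x + c * x ^ 2)
        = (1 / (D - h)) * ∫ x in (-D)..(-h), v4 * x ^ 4 / 24) →
      ((1 / (2 * h)) * ∫ x in (-h)..h, (a + b * x + c * x ^ 2)
        = (1 / (2 * h)) * ∫ x in (-h)..h, v4 * x ^ 4 / 24) →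
      ((1 / (D - h)) * ∫ x in h..D, (a + b * x + c * x ^ 2)
        = (1 / (D - h)) * ∫ x in h..D, v4 * x ^ 4 / 24) →
      ∃ E1 E2 : ℝ,
        a - v4 * (0 : ℝ) ^ 4 / 24 = -(D ^ 2 * h ^ 2) * v4 / 120 + E1 ∧
        2 * c = (D ^ 2 + h ^ 2) * v4 / 20 + E2 ∧
        |E1| ≤ C * (D ^ 6 + h ^ 6) * |v4| ∧
        |E2| ≤ C * (D ^ 4 + h ^ 4) * |v4| := by
  refine ⟨1, one_pos, fun v4 h D a b c hh hhD H1 H2 H3 => ?_⟩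
  rw [quad_int, quart_int] at H1 H2 H3
  have hDh : D - h ≠ 0 := by intro h'; linarith
  have hh0 : h ≠ 0 := ne_of_gt hh
  have E1 : a * (-h - -D) + b * ((-h)^2 - (-D)^2)/2 + c * ((-h)^3 - (-D)^3)/3
      = v4 * ((-h)^5 - (-D)^5)/120 :=
    mul_left_cancel₀ (by simpa using hDh) H1
  have E2 : a * (h - -h) + b * (h^2 - (-h)^2)/2 + c * (h^3 - (-h)^3)/3
      = v4 * (h^5 - (-h)^5)/120 :=
    mul_left_cancel₀ (by simpa using (by positivity : (2:ℝ) * h ≠ 0)) H2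
  have E3 : a * (D - h) + b * (D^2 - h^2)/2 + c * (D^3 - h^3)/3
      = v4 * (D^5 - h^5)/120 :=
    mul_left_cancel₀ (by simpa using hDh) H3
  have hmul : h * D * (D - h) * (D + h) ≠ 0 := by
    have h1 : D + h ≠ 0 := ne_of_gt (by linarith)
    have h2 : D ≠ 0 := ne_of_gt (by linarith)
    exact mul_ne_zero (mul_ne_zero (mul_ne_zero hh0 h2) hDh) h1
  have key : (c * 40) * (h * D * (D - h) * (D + h))
      = (v4 * (D ^ 2 + h ^ 2)) * (h * D * (D - h) * (D + h)) := by
    linear_combination (60 * h) * E1 + (60 * h) * E3 - (60 * (D - h)) * E2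
  have hc : c = v4 * (D ^ 2 + h ^ 2) / 40 := by
    have := mul_right_cancel₀ hmul key
    linarith
  have ha : a = -(D ^ 2 * h ^ 2) * v4 / 120 := by
    have h2h : (2 : ℝ) * h ≠ 0 := by positivity
    have key2 : a * (2 * h) = (-(D ^ 2 * h ^ 2) * v4 / 120) * (2 * h) := by
      rw [hc] at E2; linear_combination E2
    exact mul_right_cancel₀ h2h key2
  exact ⟨0, 0, by rw [ha]; ring_nf, by rw [hc]; ring, by simp; positivity, by simp; positivity⟩
end

section
/- Let v be C^3 on [-D, D] and u the unique quadratic polynomial matching the averages of v on [-D,-h], [-h,h], [h,D] (0 < h < D). Then sup_{x∈[-D,D]} |u(x) - v(x)| ≤ C D^3 sup_{x∈[-D,D]} |v'''(x)| for an absolute constant C. -/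
/-!
Let `P` be the quadratic Taylor polynomial of `v` at `-D`; by Taylor's theorem `|v - P| ≤ ε` on
`[-D, D]` with `ε = 4 M D³`. The quadratic `q = u - P` has the same averages as `v - P` on the
three intervals, so these averages are at most `ε` in absolute value. The averages determine the
coefficients of `q` through a system that is well conditioned on `[-D, D]`, whence `|q| ≤ 11 ε`
there, and `|u - v| ≤ |q| + |v - P| ≤ 12 ε`.
-/

open MeasureTheory intervalIntegral

theorem integral_quadratic (α β γ l r : ℝ) :
    ∫ x in l..r, (α + β * x + γ * x ^ 2)
      = α * (r - l) + β * (r ^ 2 - l ^ 2) / 2 + γ * (r ^ 3 - l ^ 3) / 3 := by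
  have hc : ∀ f : ℝ → ℝ, Continuous f → IntervalIntegrable f volume l r :=
    fun f hf => hf.intervalIntegrable l r
  rw [integral_add (hc _ (by fun_prop)) (hc _ (by fun_prop)),
    integral_add (hc _ (by fun_prop)) (hc _ (by fun_prop)),
    intervalIntegral.integral_const_mul, intervalIntegral.integral_const_mul, integral_id,
    integral_pow, intervalIntegral.integral_const, smul_eq_mul]
  push_cast
  ring

noncomputable def quadraticAverage (α β γ l r : ℝ) : ℝ :=
  α + β * (l + r) / 2 + γ * (l ^ 2 + l * r + r ^ 2) / 3

theorem average_quadratic {l r : ℝ} (hlr : l ≠ r) (α β γ : ℝ) :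
    (1 / (r - l)) * ∫ x in l..r, (α + β * x + γ * x ^ 2) = quadraticAverage α β γ l r := by
  have : r - l ≠ 0 := sub_ne_zero.mpr hlr.symm
  rw [integral_quadratic, quadraticAverage]
  field_simp
  ring

theorem abs_average_le_of_abs_le {f : ℝ → ℝ} {l r ε : ℝ} (hlr : l < r)
    (hf : ∀ x ∈ Set.Icc l r, |f x| ≤ ε) : |(1 / (r - l)) * ∫ x in l..r, f x| ≤ ε := by
  have hrl : 0 < r - l := sub_pos.mpr hlr
  have := norm_integral_le_of_norm_le_const (f := f) fun x hx =>
    hf x (Set.uIcc_of_le hlr.le ▸ Set.uIoc_subset_uIcc hx)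
  rw [abs_mul, abs_of_pos (one_div_pos.mpr hrl), one_div, inv_mul_le_iff₀ hrl, mul_comm]
  simpa [abs_of_pos hrl] using this

theorem abs_quadraticAverage_sub_le {v : ℝ → ℝ} {l r a b c p₀ p₁ p₂ ε : ℝ}
    (hv : IntervalIntegrable v volume l r) (hlr : l < r)
    (hP : ∀ x ∈ Set.Icc l r, |v x - (p₀ + p₁ * x + p₂ * x ^ 2)| ≤ ε)
    (havg : (1 / (r - l)) * ∫ x in l..r, (a + b * x + c * x ^ 2)
      = (1 / (r - l)) * ∫ x in l..r, v x) :
    |quadraticAverage (a - p₀) (b - p₁) (c - p₂) l r| ≤ ε := by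
  have hPint : IntervalIntegrable (fun x => p₀ + p₁ * x + p₂ * x ^ 2) volume l r :=
    (by fun_prop : Continuous fun x : ℝ => p₀ + p₁ * x + p₂ * x ^ 2).intervalIntegrable l r
  have : quadraticAverage (a - p₀) (b - p₁) (c - p₂) l r
      = (1 / (r - l)) * ∫ x in l..r, (v x - (p₀ + p₁ * x + p₂ * x ^ 2)) := by
    rw [integral_sub hv hPint, mul_sub, ← havg, average_quadratic hlr.ne,
      average_quadratic hlr.ne, quadraticAverage, quadraticAverage, quadraticAverage]
    ring
  rw [this]
  exact abs_average_le_of_abs_le hlr hP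

theorem abs_quadratic_le_of_abs_quadraticAverage_le {α β γ h D ε x : ℝ} (hh : 0 ≤ h)
    (hhD : h < D) (h₁ : |quadraticAverage α β γ (-D) (-h)| ≤ ε)
    (h₂ : |quadraticAverage α β γ (-h) h| ≤ ε) (h₃ : |quadraticAverage α β γ h D| ≤ ε)
    (hx : x ∈ Set.Icc (-D) D) : |α + β * x + γ * x ^ 2| ≤ 11 * ε := by
  have hD : 0 < D := hh.trans_lt hhD
  have hβ : |β| * (D + h) ≤ 2 * ε := by
    have : β * (D + h) = quadraticAverage α β γ h D - quadraticAverage α β γ (-D) (-h) := by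
      unfold quadraticAverage; ring
    rw [← abs_of_pos (by positivity : 0 < D + h), ← abs_mul, this]
    linarith [abs_sub (quadraticAverage α β γ h D) (quadraticAverage α β γ (-D) (-h))]
  have hγ : |γ| * (D * (D + h)) ≤ 6 * ε := by
    have : γ * (D * (D + h)) = 3 / 2 * (quadraticAverage α β γ (-D) (-h) +
        quadraticAverage α β γ h D) - 3 * quadraticAverage α β γ (-h) h := by
      unfold quadraticAverage; ring
    rw [← abs_of_pos (by positivity : 0 < D * (D + h)), ← abs_mul, this]
    rw [abs_le] at h₁ h₂ h₃ ⊢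
    constructor <;> linarith
  have hα : |α| ≤ 3 * ε := by
    have : α = quadraticAverage α β γ (-h) h - γ * h ^ 2 / 3 := by
      unfold quadraticAverage; ring
    have hγh : |γ * h ^ 2 / 3| ≤ 2 * ε := by
      rw [abs_div, abs_mul, abs_pow, sq_abs, abs_of_pos (three_pos : (0 : ℝ) < 3)]
      have : h ^ 2 ≤ D * (D + h) := by nlinarith
      linarith [mul_le_mul_of_nonneg_left this (abs_nonneg γ)]
    rw [this]
    linarith [abs_sub (quadraticAverage α β γ (-h) h) (γ * h ^ 2 / 3)]
  have hxD : |x| ≤ D := abs_le.mpr hx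
  have hβx : |β * x| ≤ 2 * ε := by
    rw [abs_mul]
    exact (mul_le_mul_of_nonneg_left (by linarith) (abs_nonneg β)).trans hβ
  have hγx : |γ * x ^ 2| ≤ 6 * ε := by
    rw [abs_mul, abs_pow]
    exact (mul_le_mul_of_nonneg_left (by nlinarith [abs_nonneg x]) (abs_nonneg γ)).trans hγ
  linarith [abs_add_three α (β * x) (γ * x ^ 2)]

theorem taylorWithinEval_two (f : ℝ → ℝ) (s : Set ℝ) (x₀ x : ℝ) :
    taylorWithinEval f 2 s x₀ x = f x₀ + derivWithin f s x₀ * (x - x₀) +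
      iteratedDerivWithin 2 f s x₀ / 2 * (x - x₀) ^ 2 := by
  simp only [taylor_within_apply, Finset.sum_range_succ, Finset.sum_range_zero, smul_eq_mul,
    iteratedDerivWithin_zero, iteratedDerivWithin_one, Nat.factorial]
  push_cast
  ring

theorem exists_quadratic_abs_sub_le {v : ℝ → ℝ} {a b M : ℝ} (hv : ContDiff ℝ 3 v) (hab : a < b)
    (hM : ∀ x ∈ Set.Icc a b, |iteratedDeriv 3 v x| ≤ M) :
    ∃ p₀ p₁ p₂ : ℝ, ∀ x ∈ Set.Icc a b,
      |v x - (p₀ + p₁ * x + p₂ * x ^ 2)| ≤ M * (b - a) ^ 3 / 2 := by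
  set d₁ := derivWithin v (Set.Icc a b) a
  set d₂ := iteratedDerivWithin 2 v (Set.Icc a b) a
  refine ⟨v a - d₁ * a + d₂ / 2 * a ^ 2, d₁ - d₂ * a, d₂ / 2, fun x hx => ?_⟩
  have hv''' : ∀ y ∈ Set.Icc a b, ‖iteratedDerivWithin 3 v (Set.Icc a b) y‖ ≤ M := fun y hy => by
    rw [Real.norm_eq_abs, iteratedDerivWithin_eq_iteratedDeriv (uniqueDiffOn_Icc hab)
      hv.contDiffAt hy]
    exact hM y hy
  have hTaylor := taylor_mean_remainder_bound (n := 2) hab.le hv.contDiffOn hx hv'''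
  rw [Real.norm_eq_abs, taylorWithinEval_two] at hTaylor
  have hM₀ : 0 ≤ M := (abs_nonneg _).trans (hM a ⟨le_rfl, hab.le⟩)
  calc |v x - (v a - d₁ * a + d₂ / 2 * a ^ 2 + (d₁ - d₂ * a) * x + d₂ / 2 * x ^ 2)|
      = |v x - (v a + d₁ * (x - a) + d₂ / 2 * (x - a) ^ 2)| := by ring_nf
    _ ≤ M * (x - a) ^ 3 / 2 := by
      simpa only [Nat.reduceAdd, Nat.factorial_two, Nat.cast_ofNat] using hTaylor
    _ ≤ M * (b - a) ^ 3 / 2 := by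
      gcongr
      · linarith [hx.1]
      · exact hx.2

/-- If `v` is `C³` and `u = a + b x + c x²` is the quadratic matching the
averages of `v` on `[-D,-h]`, `[-h,h]`, `[h,D]` (`0 < h < D`), then
`sup_{[-D,D]} |u - v| ≤ C D³ sup_{[-D,D]} |v'''|` for an absolute constant `C`. -/
theorem lifting_sup_error_bound :
    ∃ C > (0 : ℝ), ∀ (v : ℝ → ℝ), ContDiff ℝ 3 v →
      ∀ (h D a b c M : ℝ), 0 < h → h < D →
      (∀ x ∈ Set.Icc (-D) D, |iteratedDeriv 3 v x| ≤ M) →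
      ((1 / (D - h)) * ∫ x in (-D)..(-h), (a + b * x + c * x ^ 2)
        = (1 / (D - h)) * ∫ x in (-D)..(-h), v x) →
      ((1 / (2 * h)) * ∫ x in (-h)..h, (a + b * x + c * x ^ 2)
        = (1 / (2 * h)) * ∫ x in (-h)..h, v x) →
      ((1 / (D - h)) * ∫ x in h..D, (a + b * x + c * x ^ 2)
        = (1 / (D - h)) * ∫ x in h..D, v x) →
      ∀ x ∈ Set.Icc (-D) D, |(a + b * x + c * x ^ 2) - v x| ≤ C * D ^ 3 * M := by
  refine ⟨48, by norm_num, fun v hv h D a b c M hh hhD hM h₁ h₂ h₃ x hx => ?_⟩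
  obtain ⟨p₀, p₁, p₂, hP⟩ := exists_quadratic_abs_sub_le hv (by linarith) hM
  have hPsub : ∀ {l r}, -D ≤ l → r ≤ D → ∀ y ∈ Set.Icc l r,
      |v y - (p₀ + p₁ * y + p₂ * y ^ 2)| ≤ M * (D - -D) ^ 3 / 2 :=
    fun hl hr y hy => hP y (Set.Icc_subset_Icc hl hr hy)
  have hvint : ∀ l r, IntervalIntegrable v volume l r := hv.continuous.intervalIntegrable
  have hq := abs_quadratic_le_of_abs_quadraticAverage_le hh.le hhD
    (abs_quadraticAverage_sub_le (hvint _ _) (by linarith) (hPsub le_rfl (by linarith))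
      (by rwa [sub_neg_eq_add, neg_add_eq_sub]))
    (abs_quadraticAverage_sub_le (hvint _ _) (by linarith) (hPsub (by linarith) hhD.le)
      (by rwa [sub_neg_eq_add, ← two_mul]))
    (abs_quadraticAverage_sub_le (hvint _ _) hhD (hPsub (by linarith) le_rfl) h₃) hx
  calc |(a + b * x + c * x ^ 2) - v x|
      = |((a - p₀) + (b - p₁) * x + (c - p₂) * x ^ 2) - (v x - (p₀ + p₁ * x + p₂ * x ^ 2))| := by
        ring_nf
    _ ≤ 11 * (M * (D - -D) ^ 3 / 2) + M * (D - -D) ^ 3 / 2 :=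
        (abs_sub _ _).trans (add_le_add hq (hP x hx))
    _ = 48 * D ^ 3 * M := by ring
end
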